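/- arXiv:1606.06493 — 7 statements merged into one kernel-verified Lean document; each statement's English description precedes it below -/
import Mathlib

section
/- If P and Q are directed partial orders, Q is Dedekind complete, then there is a Tukey quotient from P to Q (a map carrying cofinal subsets of P to cofinal subsets of Q) if and only if there is an order-preserving map φ : P → Q whose image is cofinal in Q. -/
/-- A subset `C` of a preorder is cofinal if every element lies below some element of `C`. -/
def CofinalSet {α : Type*} [Preorder α] (C : Set α) : Prop := ∀ a : α, ∃ c ∈ C, a ≤ c

/-- A Tukey quotient carries cofinal sets to cofinal sets. -/
def TukeyQuotient {α β : Type*} [Preorder α] [Preorder β] (φ : α → β) : Prop :=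
  ∀ C : Set α, CofinalSet C → CofinalSet (φ '' C)

/-- A poset is directed if every finite subset has an upper bound. -/
def DirectedPoset (α : Type*) [Preorder α] : Prop := ∀ s : Finset α, ∃ b : α, ∀ x ∈ s, x ≤ b

/-- Dedekind complete: every subset bounded above has a least upper bound. -/
def DedComplete (α : Type*) [Preorder α] : Prop :=
  ∀ S : Set α, (∃ b : α, ∀ x ∈ S, x ≤ b) → ∃ l : α, IsLUB S l

/-- for directed `P`, `Q` with `Q` Dedekind complete, a Tukey quotient from `P`
to `Q` exists iff there is an order preserving map `P → Q` with cofinal image. -/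
theorem stmt0 {P Q : Type*} [PartialOrder P] [PartialOrder Q]
    (hP : DirectedPoset P) (hQ : DirectedPoset Q) (hDC : DedComplete Q) :
    (∃ φ : P → Q, TukeyQuotient φ) ↔
      (∃ φ : P → Q, Monotone φ ∧ CofinalSet (Set.range φ)) := by
  constructor
  · rintro ⟨φ, hφ⟩
    have key : ∀ q : Q, ∃ p₀ : P, ∀ p, p₀ ≤ p → q ≤ φ p := by
      intro q
      by_contra h
      push_neg at h
      have hC : CofinalSet {p : P | ¬ q ≤ φ p} := by
        intro a
        obtain ⟨p, hap, hq⟩ := h a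
        exact ⟨p, hq, hap⟩
      obtain ⟨c, ⟨p, hp, rfl⟩, hqc⟩ := hφ _ hC q
      exact hp hqc
    have hbdd : ∀ p : P, ∃ b, ∀ x ∈ {q : Q | ∀ p', p ≤ p' → q ≤ φ p'}, x ≤ b :=
      fun p => ⟨φ p, fun x hx => hx p le_rfl⟩
    choose ψ hψ using fun p => hDC _ (hbdd p)
    refine ⟨ψ, ?_, ?_⟩
    · intro p p' hpp'
      exact (hψ p).2 (fun x hx => (hψ p').1 (fun p'' h'' => hx p'' (hpp'.trans h'')))
    · intro q
      obtain ⟨p₀, hp₀⟩ := key q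
      exact ⟨ψ p₀, ⟨p₀, rfl⟩, (hψ p₀).1 hp₀⟩
  · rintro ⟨φ, hmono, hcof⟩
    refine ⟨φ, fun C hC q => ?_⟩
    obtain ⟨_, ⟨p, rfl⟩, hq⟩ := hcof q
    obtain ⟨c, hcC, hpc⟩ := hC p
    exact ⟨φ c, ⟨c, hcC, rfl⟩, hq.trans (hmono hpc)⟩
end

section
/- Let P, Q, R be directed posets, where every countable subset of P is bounded and R is Dedekind complete and strongly countably determined. If the product P × Q (coordinatewise order) Tukey quotients to R, then Q Tukey quotients to R. -/
/-- if every countable subset of `P` is bounded, `R` is Dedekind complete and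
strongly countably determined, and `P × Q ≥_T R`, then `Q ≥_T R`. -/
theorem stmt9 {P Q R : Type*} [PartialOrder P] [PartialOrder Q] [PartialOrder R]
    (hP : DirectedPoset P) (hQ : DirectedPoset Q) (hR : DirectedPoset R)
    (haddP : ∀ S : Set P, S.Countable → ∃ b, ∀ x ∈ S, x ≤ b)
    (hRdc : DedComplete R)
    (hRcd : ∀ S : Set R, (∀ T ⊆ S, T.Countable → ∃ b, ∀ x ∈ T, x ≤ b) → ∃ b, ∀ x ∈ S, x ≤ b)
    (hRscd : ∀ B : Set R, (∃ b, ∀ x ∈ B, x ≤ b) →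
      ∃ B₀ ⊆ B, B₀.Countable ∧ ∀ q : R, ((∀ x ∈ B₀, x ≤ q) ↔ (∀ x ∈ B, x ≤ q)))
    (hPQ : ∃ φ : P × Q → R, TukeyQuotient φ) :
    ∃ φ : Q → R, TukeyQuotient φ := by
  obtain ⟨φ, hφ⟩ := hPQ
  -- Step 1: a Tukey-type map g : R → P × Q with ∀ y ≥ g r, r ≤ φ y
  have hg : ∀ r : R, ∃ x : P × Q, ∀ y : P × Q, x ≤ y → r ≤ φ y := by
    intro r
    by_contra h
    push_neg at h
    have hcof : CofinalSet {y : P × Q | ¬ r ≤ φ y} := by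
      intro a
      obtain ⟨y, hy, hny⟩ := h a
      exact ⟨y, hny, hy⟩
    obtain ⟨c, hc, hrc⟩ := hφ _ hcof r
    obtain ⟨y, hy, rfl⟩ := hc
    exact hy hrc
  choose g hgspec using hg
  -- Step 2: for each q, the set B q is bounded in R
  set B : Q → Set R := fun q => {r : R | (g r).2 ≤ q} with hBdef
  have hBbdd : ∀ q, ∃ b, ∀ r ∈ B q, r ≤ b := by
    intro q
    apply hRcd
    intro T hTsub hTc
    obtain ⟨p₀, hp₀⟩ := haddP ((fun r => (g r).1) '' T) (hTc.image _)
    refine ⟨φ (p₀, q), fun r hr => ?_⟩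
    exact hgspec r (p₀, q) ⟨hp₀ _ ⟨r, hr, rfl⟩, hTsub hr⟩
  -- Step 3: define ψ q as a least upper bound of B q
  have hlub : ∀ q, ∃ l, IsLUB (B q) l := fun q => hRdc _ (hBbdd q)
  choose ψ hψ using hlub
  have hmono : ∀ q q' : Q, q ≤ q' → ψ q ≤ ψ q' := by
    intro q q' h
    exact (hψ q).2 (fun r hr => (hψ q').1 (le_trans hr h))
  have hcofim : ∀ r : R, r ≤ ψ ((g r).2) := by
    intro r
    exact (hψ _).1 (le_refl _)
  refine ⟨ψ, ?_⟩
  intro C hC r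
  obtain ⟨c, hcC, hc⟩ := hC ((g r).2)
  exact ⟨ψ c, ⟨c, hcC, rfl⟩, le_trans (hcofim r) (hmono _ _ hc)⟩
end

section
/- Let P and Q be directed posets with P Dedekind complete, and suppose P = ⋃_{α < κ} P_α where for each α there is an order preserving map φ_α : Q → P with image cofinal for P_α in P. Then there is a Tukey quotient from Q × [κ]^{<ω} to P, where [κ]^{<ω} is the set of finite subsets of κ ordered by inclusion. -/
/-- let `P`, `Q` be directed posets with `P` Dedekind complete, and suppose
`P = ⋃_{α < κ} P_α` where for each `α` there is an order preserving `φ_α : Q → P` whose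
image is cofinal for `P_α` in `P`. Then `Q × [κ]^{<ω} ≥_T P`.  (The cardinal `κ` is
represented by an index type `ι`, and `[κ]^{<ω}` by `Finset ι` ordered by inclusion.) -/
theorem stmt10 {P Q : Type*} {ι : Type*} [PartialOrder P] [PartialOrder Q]
    (hP : DirectedPoset P) (hQ : DirectedPoset Q) (hPdc : DedComplete P)
    (Pa : ι → Set P) (hcover : (⋃ a : ι, Pa a) = Set.univ)
    (φa : ι → Q → P) (hmono : ∀ a, Monotone (φa a))
    (hcof : ∀ a : ι, ∀ p ∈ Pa a, ∃ q : Q, p ≤ φa a q) :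
    ∃ Φ : Q × Finset ι → P, TukeyQuotient Φ := by
  classical
  have h : ∀ x : Q × Finset ι, ∃ l, IsLUB ((fun a => φa a x.1) '' ↑x.2) l := by
    intro x
    apply hPdc
    obtain ⟨b, hb⟩ := hP (x.2.image (fun a => φa a x.1))
    refine ⟨b, fun p hp => ?_⟩
    obtain ⟨a, ha, rfl⟩ := hp
    exact hb _ (Finset.mem_image_of_mem _ ha)
  choose Φ hΦ using h
  refine ⟨Φ, fun C hC p => ?_⟩
  have hp : p ∈ ⋃ a : ι, Pa a := hcover ▸ Set.mem_univ p
  obtain ⟨a, ha⟩ := Set.mem_iUnion.mp hp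
  obtain ⟨q, hq⟩ := hcof a p ha
  obtain ⟨⟨q', F'⟩, hmem, hle⟩ := hC (q, {a})
  refine ⟨Φ (q', F'), Set.mem_image_of_mem _ hmem, ?_⟩
  have h1 : φa a q' ∈ (fun b => φa b q') '' ↑F' :=
    Set.mem_image_of_mem _ (hle.2 (Finset.mem_singleton_self a))
  exact le_trans hq (le_trans (hmono a hle.1) ((hΦ (q', F')).1 h1))
end

section
/- Let (κ_n) be a non-decreasing sequence of infinite cardinals with supremum κ, and let A be an infinite subset of ℕ. Then the product poset ∏_{n ∈ A} [κ_n]^{<ω} is Tukey equivalent to ([κ]^{<ω})^ω. -/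
open Cardinal

lemma tukeyQuotient_of_galois {α β : Type*} [Preorder α] [Preorder β] (φ : α → β) (g : β → α)
    (h : ∀ y a, g y ≤ a → y ≤ φ a) : TukeyQuotient φ := by
  intro C hC y
  obtain ⟨c, hc, hle⟩ := hC (g y)
  exact ⟨φ c, Set.mem_image_of_mem φ hc, h y c hle⟩

section Aux

universe u

variable {X : ℕ → Type u} {Y : Type u}

/-- an auxiliary coding map. -/
noncomputable def qmapAux (emb : ∀ k n, k ≤ n → (X k ↪ X n))
    (r : ∀ n, (ULift.{u} ℕ × X n) ↪ X n) (cc : ∀ n, ℕ ↪ X n) (n : ℕ) (p : Σ k, X k) : X n :=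
  if h : p.1 ≤ n then r n (⟨p.1⟩, emb p.1 n h p.2) else cc n 0

lemma qmapAux_injOn (emb : ∀ k n, k ≤ n → (X k ↪ X n))
    (r : ∀ n, (ULift.{u} ℕ × X n) ↪ X n) (cc : ∀ n, ℕ ↪ X n) (n : ℕ) :
    Set.InjOn (qmapAux emb r cc n) {p | p.1 ≤ n} := by
  rintro ⟨k, y⟩ hk ⟨k', y'⟩ hk' h
  simp only [Set.mem_setOf_eq] at hk hk'
  simp only [qmapAux, dif_pos hk, dif_pos hk'] at h
  have hp := (r n).injective h
  have h1 : k = k' := congrArg ULift.down (congrArg Prod.fst hp)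
  subst h1
  have h2 := (Prod.ext_iff.mp hp).2
  have h3 : y = y' := (emb k n hk).injective h2
  rw [h3]

/-- `qmap n` is injective on `{z | (s z).1 ≤ n}`. -/
noncomputable def qmap (s : Y ↪ Σ n, X n) (emb : ∀ k n, k ≤ n → (X k ↪ X n))
    (r : ∀ n, (ULift.{u} ℕ × X n) ↪ X n) (cc : ∀ n, ℕ ↪ X n) (n : ℕ) (z : Y) : X n :=
  qmapAux emb r cc n (s z)

lemma qmap_injOn (s : Y ↪ Σ n, X n) (emb : ∀ k n, k ≤ n → (X k ↪ X n))
    (r : ∀ n, (ULift.{u} ℕ × X n) ↪ X n) (cc : ∀ n, ℕ ↪ X n) (n : ℕ) :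
    Set.InjOn (qmap s emb r cc n) {z | (s z).1 ≤ n} := fun z hz w hw h =>
  s.injective (qmapAux_injOn emb r cc n hz hw h)

lemma pieceSet_finite {Y : Type*} {Z : Type*} (q : Y → Z) (idx : Y → ℕ) (n : ℕ)
    (hq : Set.InjOn q {z | idx z ≤ n}) (t : Finset Z) :
    {z | idx z ≤ n ∧ q z ∈ t}.Finite := by
  apply Set.Finite.of_finite_image (f := q)
  · apply t.finite_toSet.subset
    rintro _ ⟨z, ⟨_, hz⟩, rfl⟩
    exact hz
  · exact hq.mono fun z hz => hz.1

lemma phi_exists {ι : Type*} (e : ι ≃ ℕ × ℕ) (ℓ : ι → ℕ)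
    (hub : ∀ m N, ∃ i, 1 ≤ i ∧ N ≤ ℓ (e.symm (m, i)))
    (s : Y ↪ Σ n, X n)
    (emb : ∀ k n, k ≤ n → (X k ↪ X n))
    (r : ∀ n, (ULift.{u} ℕ × X n) ↪ X n)
    (cc : ∀ n, ℕ ↪ X n) :
    ∃ φ : (∀ i : ι, Finset (X (ℓ i))) → (ℕ → Finset Y), TukeyQuotient φ := by
  classical
  let q := qmap s emb r cc
  have hex : ∀ (x : ℕ → Finset Y) (m : ℕ), ∃ i, 1 ≤ i ∧
      ∀ z ∈ x m, (s z).1 ≤ ℓ (e.symm (m, i)) := by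
    intro x m
    obtain ⟨i, h1, h2⟩ := hub m ((x m).sup fun z => (s z).1)
    exact ⟨i, h1, fun z hz => le_trans (Finset.le_sup (f := fun z => (s z).1) hz) h2⟩
  refine ⟨fun b m => (Finset.Icc 1 (b (e.symm (m, 0))).card).biUnion
      (fun i => (pieceSet_finite (q (ℓ (e.symm (m, i)))) (fun z => (s z).1) _
        (qmap_injOn s emb r cc _) (b (e.symm (m, i)))).toFinset), ?_⟩
  apply tukeyQuotient_of_galois _
    (fun x (i : ι) =>
      if (e i).2 = 0 then (Finset.range (Nat.find (hex x (e i).1))).map (cc (ℓ i))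
      else if (e i).2 = Nat.find (hex x (e i).1) then (x (e i).1).image (q (ℓ i)) else ∅)
  intro x b h m
  have hN1 : 1 ≤ Nat.find (hex x m) := (Nat.find_spec (hex x m)).1
  have hN2 : ∀ w ∈ x m, (s w).1 ≤ ℓ (e.symm (m, Nat.find (hex x m))) :=
    (Nat.find_spec (hex x m)).2
  have h0 := h (e.symm (m, 0))
  simp only [Equiv.apply_symm_apply, if_true, eq_self_iff_true, if_pos] at h0
  have hcard : Nat.find (hex x m) ≤ (b (e.symm (m, 0))).card := by
    calc Nat.find (hex x m)
        = ((Finset.range (Nat.find (hex x m))).map (cc (ℓ (e.symm (m, 0))))).card := by simp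
    _ ≤ _ := Finset.card_le_card h0
  have h1 := h (e.symm (m, Nat.find (hex x m)))
  simp only [Equiv.apply_symm_apply] at h1
  rw [if_neg (Nat.one_le_iff_ne_zero.mp hN1)] at h1
  intro z hz
  rw [Finset.mem_biUnion]
  refine ⟨Nat.find (hex x m), by rw [Finset.mem_Icc]; exact ⟨hN1, hcard⟩, ?_⟩
  rw [Set.Finite.mem_toFinset]
  exact ⟨hN2 z hz, h1 (Finset.mem_image_of_mem _ hz)⟩

end Aux

theorem stmt12 (κ : ℕ → Cardinal.{u}) (hinf : ∀ n, ℵ₀ ≤ κ n) (hmono : Monotone κ)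
    (A : Set ℕ) (hA : A.Infinite) :
    (∃ φ : (∀ n : A, Finset (κ n).out) → (ℕ → Finset (⨆ n, κ n).out), TukeyQuotient φ) ∧
    (∃ ψ : (ℕ → Finset (⨆ n, κ n).out) → (∀ n : A, Finset (κ n).out), TukeyQuotient ψ) := by
  classical
  have hbdd : BddAbove (Set.range κ) := Cardinal.bddAbove_range κ
  have hle : ∀ n, κ n ≤ ⨆ n, κ n := fun n => le_ciSup hbdd n
  haveI : Infinite A := hA.to_subtype
  obtain ⟨D⟩ := nonempty_denumerable A
  let E : ℕ ≃ A := (Denumerable.eqv A).symm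
  have f : ∀ n : ℕ, ((κ n).out ↪ (⨆ n, κ n).out) := fun n =>
    Classical.choice (Cardinal.out_embedding.mp (hle n))
  have emb : ∀ k n, k ≤ n → ((κ k).out ↪ (κ n).out) := fun k n h =>
    Classical.choice (Cardinal.out_embedding.mp (hmono h))
  have hinf' : ∀ n, Infinite (κ n).out := fun n =>
    Cardinal.infinite_iff.mpr (by rw [Cardinal.mk_out]; exact hinf n)
  have cc : ∀ n : ℕ, (ℕ ↪ (κ n).out) := fun n => @Infinite.natEmbedding _ (hinf' n)
  have r : ∀ n : ℕ, ((ULift.{u} ℕ × (κ n).out) ↪ (κ n).out) := by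
    intro n
    refine Classical.choice ((Cardinal.le_def _ _).mp ?_)
    rw [Cardinal.mk_prod]
    simp only [Cardinal.mk_out, Cardinal.mk_uLift, Cardinal.mk_nat, Cardinal.lift_id,
      Cardinal.lift_aleph0]
    exact (Cardinal.mul_eq_right (hinf n) (hinf n) Cardinal.aleph0_ne_zero).le
  have hs : #((⨆ n, κ n).out) ≤ #(Σ n, (κ n).out) := by
    rw [Cardinal.mk_out, Cardinal.mk_sigma]
    simp only [Cardinal.mk_out]
    exact Cardinal.iSup_le_sum κ
  obtain ⟨s⟩ := (Cardinal.le_def _ _).mp hs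
  constructor
  · -- φ direction
    have hub : ∀ m N, ∃ i, 1 ≤ i ∧
        N ≤ ((E.symm.trans Nat.pairEquiv.symm).symm (m, i) : ℕ) := by
      intro m N
      have hinj : Function.Injective
          (fun i : ℕ => (((E.symm.trans Nat.pairEquiv.symm).symm (m, i + 1) : A) : ℕ)) := by
        intro i j hij
        have := Subtype.val_injective hij
        have := (E.symm.trans Nat.pairEquiv.symm).symm.injective this
        have := (Prod.ext_iff.mp this).2
        omega
      obtain ⟨_, ⟨i, rfl⟩, hi⟩ := (Set.infinite_range_of_injective hinj).exists_gt N
      exact ⟨i + 1, by omega, hi.le⟩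
    exact phi_exists (X := fun n => (κ n).out) (E.symm.trans Nat.pairEquiv.symm)
      (fun i => (i : ℕ)) hub s emb r cc
  · -- ψ direction
    refine ⟨fun x n => (x (E.symm n)).preimage (f (n : ℕ)) ((f (n : ℕ)).injective.injOn), ?_⟩
    apply tukeyQuotient_of_galois _ (fun b m => (b (E m)).map (f ((E m : A) : ℕ)))
    intro b x h n
    obtain ⟨m, rfl⟩ : ∃ m, E m = n := ⟨E.symm n, E.apply_symm_apply n⟩
    intro z hz
    rw [Finset.mem_preimage]
    have := h m (Finset.mem_map_of_mem (f ((E m : A) : ℕ)) hz)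
    simpa only [Equiv.symm_apply_apply] using this
end

section
/- cof(([ℵ_ω]^{<ω})^ω) = max(𝔡, cof([ℵ_ω]^{≤ω})), where 𝔡 = cof(ω^ω) and [ℵ_ω]^{≤ω} is the poset of countable subsets of ℵ_ω under inclusion. -/
open Cardinal

/-- The cofinality of a preorder: least cardinality of a cofinal subset. -/
noncomputable def cofP (α : Type u) [Preorder α] : Cardinal.{u} :=
  sInf {c : Cardinal.{u} | ∃ C : Set α, CofinalSet C ∧ #C = c}

lemma cofP_le {α : Type u} [Preorder α] {C : Set α} (h : CofinalSet C) : cofP α ≤ #C :=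
  csInf_le (OrderBot.bddBelow _) ⟨C, h, rfl⟩

lemma exists_cofinal_mk (α : Type u) [Preorder α] :
    ∃ C : Set α, CofinalSet C ∧ #C = cofP α := by
  have hne : {c : Cardinal.{u} | ∃ C : Set α, CofinalSet C ∧ #C = c}.Nonempty :=
    ⟨#(Set.univ : Set α), Set.univ, fun a => ⟨a, trivial, le_refl a⟩, rfl⟩
  exact csInf_mem hne

/-- A monotone filtration of a countable set capturing all its finite subsets. -/
lemma exists_filtration {α : Type*} (s : Set α) (hs : s.Countable) :
    ∃ F : ℕ → Finset α, Monotone F ∧ ∀ t : Finset α, ↑t ⊆ s → ∃ n, t ⊆ F n := by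
  classical
  rcases s.eq_empty_or_nonempty with rfl | hne
  · refine ⟨fun _ => ∅, monotone_const, fun t ht => ⟨0, ?_⟩⟩
    intro x hx
    exact absurd (ht hx) (Set.notMem_empty x)
  · obtain ⟨f, hf⟩ := hs.exists_eq_range hne
    refine ⟨fun n => (Finset.range n).image f, ?_, ?_⟩
    · intro m n hmn
      exact Finset.image_subset_image (Finset.range_subset_range.2 hmn)
    · intro t ht
      have hmem : ∀ x ∈ t, ∃ m, f m = x := by
        intro x hx
        have : x ∈ Set.range f := hf ▸ ht hx
        exact this
      set r : α → ℕ := fun x => if h : ∃ m, f m = x then h.choose else 0 with hr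
      refine ⟨(t.image r).sup id + 1, ?_⟩
      intro x hx
      have hex := hmem x hx
      have hfx : f (r x) = x := by
        simp only [hr, dif_pos hex]
        exact hex.choose_spec
      have hlt : r x < (t.image r).sup id + 1 :=
        Nat.lt_succ_of_le (Finset.le_sup (f := id) (Finset.mem_image_of_mem r hx))
      exact Finset.mem_image.2 ⟨r x, Finset.mem_range.2 hlt, hfx⟩

/-- `cof(([ℵ_ω]^{<ω})^ω) = max(𝔡, cof([ℵ_ω]^{≤ω}))`, where `𝔡 = cof(ω^ω)`
(coordinatewise order) and `[ℵ_ω]^{≤ω}` is the poset of countable subsets of `ℵ_ω` under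
inclusion.  `ℵ_ω` is represented by the type `(aleph ω).out`. -/
theorem stmt14 :
    cofP (ℕ → Finset (Cardinal.aleph ω).out) =
      max (cofP (ℕ → ℕ))
        (cofP {s : Set (Cardinal.aleph ω).out // s.Countable}) := by
  classical
  set κ := (Cardinal.aleph ω).out with hκ
  haveI : Infinite κ := by
    rw [Cardinal.infinite_iff, hκ, mk_out]; exact aleph0_le_aleph ω
  set e : ℕ ↪ κ := Infinite.natEmbedding κ with he
  -- Q : countable sets
  -- lower bound: d ≤ cofP P and λ ≤ cofP P
  obtain ⟨C, hC, hCmk⟩ := exists_cofinal_mk (ℕ → Finset κ)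
  have hd_le : cofP (ℕ → ℕ) ≤ cofP (ℕ → Finset κ) := by
    set ψ : ↥C → (ℕ → ℕ) := fun c n => ((c.1 n).preimage e (e.injective.injOn)).sup id with hψ
    have hcof : CofinalSet (Set.range ψ) := by
      intro f
      obtain ⟨c, hcC, hc⟩ := hC (fun n => ({e (f n)} : Finset κ))
      refine ⟨ψ ⟨c, hcC⟩, Set.mem_range_self _, ?_⟩
      intro n
      have hmem : e (f n) ∈ c n := hc n (Finset.mem_singleton_self _)
      have : f n ∈ (c n).preimage e (e.injective.injOn) := Finset.mem_preimage.2 hmem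
      exact Finset.le_sup (f := id) this
    calc cofP (ℕ → ℕ) ≤ #(Set.range ψ) := cofP_le hcof
      _ ≤ #(↥C) := mk_range_le
      _ = cofP (ℕ → Finset κ) := hCmk
  have hq_le : cofP {s : Set κ // s.Countable} ≤ cofP (ℕ → Finset κ) := by
    set χ : ↥C → {s : Set κ // s.Countable} :=
      fun c => ⟨⋃ n, ↑(c.1 n), Set.countable_iUnion fun n => (c.1 n).countable_toSet⟩ with hχ
    have hcof : CofinalSet (Set.range χ) := by
      rintro ⟨s, hs⟩
      rcases s.eq_empty_or_nonempty with rfl | hne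
      · obtain ⟨c, hcC, _⟩ := hC (fun _ => (∅ : Finset κ))
        refine ⟨χ ⟨c, hcC⟩, Set.mem_range_self _, ?_⟩
        show (∅ : Set κ) ⊆ _
        exact Set.empty_subset _
      · obtain ⟨f, hf⟩ := hs.exists_eq_range hne
        obtain ⟨c, hcC, hc⟩ := hC (fun n => ({f n} : Finset κ))
        refine ⟨χ ⟨c, hcC⟩, Set.mem_range_self _, ?_⟩
        show s ⊆ ⋃ n, ↑(c n)
        intro x hx
        rw [hf] at hx
        obtain ⟨n, rfl⟩ := hx
        exact Set.mem_iUnion.2 ⟨n, hc n (Finset.mem_singleton_self _)⟩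
    calc cofP {s : Set κ // s.Countable} ≤ #(Set.range χ) := cofP_le hcof
      _ ≤ #(↥C) := mk_range_le
      _ = cofP (ℕ → Finset κ) := hCmk
  -- upper bound
  obtain ⟨D, hD, hDmk⟩ := exists_cofinal_mk (ℕ → ℕ)
  obtain ⟨S, hS, hSmk⟩ := exists_cofinal_mk {s : Set κ // s.Countable}
  -- d is infinite
  have hdinf : ℵ₀ ≤ cofP (ℕ → ℕ) := by
    rw [← hDmk]
    by_contra hlt
    push_neg at hlt
    have hfin : D.Finite := lt_aleph0_iff_set_finite.1 hlt
    obtain ⟨c, hcD, hc⟩ := hD (fun n => (hfin.toFinset.sup fun d => d n) + 1)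
    have h1 : c 0 ≤ hfin.toFinset.sup fun d => d 0 :=
      Finset.le_sup (f := fun d => d 0) (hfin.mem_toFinset.2 hcD)
    have h2 : (hfin.toFinset.sup fun d => d 0) + 1 ≤ c 0 := hc 0
    exact absurd (lt_of_le_of_lt h2 (Nat.lt_succ_of_le h1)) (lt_irrefl _)
  -- choose filtrations
  set Ffun : {s : Set κ // s.Countable} → ℕ → Finset κ :=
    fun s => (exists_filtration s.1 s.2).choose with hFfun
  have hFmono : ∀ s, Monotone (Ffun s) := fun s => (exists_filtration s.1 s.2).choose_spec.1
  have hFcap : ∀ s, ∀ t : Finset κ, ↑t ⊆ s.1 → ∃ n, t ⊆ Ffun s n :=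
    fun s => (exists_filtration s.1 s.2).choose_spec.2
  set φ : ↥S × ↥D → (ℕ → Finset κ) := fun p n => Ffun p.1.1 (p.2.1 n) with hφ
  have hcofφ : CofinalSet (Set.range φ) := by
    intro a
    have hU : (⋃ n, ↑(a n) : Set κ).Countable :=
      Set.countable_iUnion fun n => (a n).countable_toSet
    obtain ⟨s, hsS, hs⟩ := hS ⟨⋃ n, ↑(a n), hU⟩
    have hsub : ∀ n, (↑(a n) : Set κ) ⊆ s.1 := by
      intro n
      exact (Set.subset_iUnion (fun n => (↑(a n) : Set κ)) n).trans hs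
    choose g hgspec using fun n => hFcap s (a n) (hsub n)
    obtain ⟨f, hfD, hf⟩ := hD g
    refine ⟨φ (⟨s, hsS⟩, ⟨f, hfD⟩), Set.mem_range_self _, ?_⟩
    intro n
    exact (hgspec n).trans (hFmono s (hf n))
  have hub : cofP (ℕ → Finset κ) ≤
      max (cofP (ℕ → ℕ)) (cofP {s : Set κ // s.Countable}) := by
    calc cofP (ℕ → Finset κ) ≤ #(Set.range φ) := cofP_le hcofφ
      _ ≤ #(↥S × ↥D) := mk_range_le
      _ = #(↥S) * #(↥D) := by rw [mk_prod, lift_id, lift_id]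
      _ ≤ max (max #(↥S) #(↥D)) ℵ₀ := mul_le_max _ _
      _ ≤ max (cofP (ℕ → ℕ)) (cofP {s : Set κ // s.Countable}) := by
          rw [hSmk, hDmk]
          apply max_le
          · exact max_le (le_max_right _ _) (le_max_left _ _)
          · exact hdinf.trans (le_max_left _ _)
  exact le_antisymm hub (max_le hd_le hq_le)
end

section
/- Suppose κ < add(Q) and for each α < κ there is a relative Tukey quotient witnessing (Q,P) ≥_T (Q_α, P_α), where each P_α is Dedekind complete. Then (Q,P) ≥_T (∏_{α<κ} Q_α, ∏_{α<κ} P_α). -/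
open Cardinal

/-- `C` is cofinal for `S` in the ambient poset. -/
def CofinalFor {α : Type*} [Preorder α] (S C : Set α) : Prop := ∀ s ∈ S, ∃ c ∈ C, s ≤ c

/-- A relative Tukey quotient witnessing `(Q',P) ≥_T (R',R)`: it maps sets cofinal for `Q'`
in `P` to sets cofinal for `R'` in `R`. -/
def RelTukeyQuotient {α β : Type*} [Preorder α] [Preorder β]
    (Q' : Set α) (R' : Set β) (φ : α → β) : Prop :=
  ∀ C : Set α, CofinalFor Q' C → CofinalFor R' (φ '' C)

/-- suppose `κ < add(Q)` (every subset of `Q` of size `≤ κ` has an upper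
bound in `Q`; `κ` is represented by an index type `ι`), each `P_α` is Dedekind complete,
and `(Q,P) ≥_T (Q_α,P_α)` for each `α < κ`.  Then `(Q,P) ≥_T (∏_α Q_α, ∏_α P_α)`. -/
theorem stmt15 {P : Type u} {ι : Type u} [PartialOrder P]
    (hPdir : DirectedPoset P) (Q : Set P)
    (hadd : ∀ S : Set P, S ⊆ Q → #S ≤ #ι → ∃ b ∈ Q, ∀ x ∈ S, x ≤ b)
    (Pa : ι → Type v) [∀ i, PartialOrder (Pa i)] (hdc : ∀ i, DedComplete (Pa i))
    (Qa : ∀ i, Set (Pa i))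
    (hquot : ∀ i, ∃ φ : P → Pa i, RelTukeyQuotient Q (Qa i) φ) :
    ∃ φ : P → (∀ i, Pa i), RelTukeyQuotient Q (Set.univ.pi Qa) φ := by
  choose φ hφ using hquot
  refine ⟨fun p i => φ i p, ?_⟩
  intro C hC q hq
  have key : ∀ i, ∃ b ∈ Q, ∀ p, b ≤ p → q i ≤ φ i p := by
    intro i
    by_contra h
    push_neg at h
    have hCof : CofinalFor Q {p | ¬ q i ≤ φ i p} := by
      intro s hs
      obtain ⟨p, hp, hnp⟩ := h s hs
      exact ⟨p, hnp, hp⟩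
    obtain ⟨c, hc, hle⟩ := hφ i _ hCof (q i) (hq i trivial)
    obtain ⟨p, hp, rfl⟩ := hc
    exact hp hle
  choose b hbQ hb using key
  obtain ⟨u, huQ, hu⟩ := hadd (Set.range b)
    (by rintro _ ⟨i, rfl⟩; exact hbQ i) Cardinal.mk_range_le
  obtain ⟨c, hcC, hc⟩ := hC u huQ
  exact ⟨(fun p i => φ i p) c, ⟨c, hcC, rfl⟩,
    fun i => hb i c ((hu _ ⟨i, rfl⟩).trans hc)⟩
end

section
/- For a regular cardinal κ and a directed poset P: P fails to have calibre κ if and only if there is a Tukey quotient from P to κ. -/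
open Cardinal

/-- `P` has calibre `κ`: every `κ`-sized subset of `P` contains a `κ`-sized bounded subset. -/
def HasCalibre (P : Type u) [Preorder P] (κ : Cardinal.{u}) : Prop :=
  ∀ S : Set P, #S = κ → ∃ T ⊆ S, #T = κ ∧ ∃ b : P, ∀ x ∈ T, x ≤ b

/-!
A Tukey quotient `φ : P → κ` amounts to a map `g : κ → P` with `g i ≤ p → i ≤ φ p`.
If a `κ`-sized `S ⊆ P` has no bounded `κ`-sized subset, enumerate it as `g`: each `p` lies
above fewer than `κ` of the `g i`, so by regularity these indices are bounded by some `φ p`.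
Conversely, given such a pair, the indices `i` with `g i ≤ p` are bounded by `φ p`, hence fewer
than `κ`; by regularity `range g` then has size `κ`, and a bound `b` of a `κ`-sized subset of it
would bound `κ` many indices by `φ b`.
-/

open Set

section Tukey

variable {α β : Type*} [Preorder α] [Preorder β]

theorem tukeyQuotient_of_le_imp_le {φ : α → β} {g : β → α} (h : ∀ b a, g b ≤ a → b ≤ φ a) :
    TukeyQuotient φ := fun _ hC b =>
  let ⟨c, hcC, hc⟩ := hC (g b)
  ⟨φ c, mem_image_of_mem φ hcC, h b c hc⟩

theorem TukeyQuotient.exists_le_imp_le {φ : α → β} (hφ : TukeyQuotient φ) :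
    ∃ g : β → α, ∀ b a, g b ≤ a → b ≤ φ a := by
  have hbound : ∀ b : β, ∃ x : α, ∀ a, x ≤ a → b ≤ φ a := by
    intro b
    by_contra! h
    have hC : CofinalSet {a | ¬ b ≤ φ a} := fun x =>
      let ⟨a, hxa, hba⟩ := h x
      ⟨a, hba, hxa⟩
    obtain ⟨_, ⟨a, ha, rfl⟩, hba⟩ := hφ _ hC b
    exact ha hba
  choose g hg using hbound
  exact ⟨g, hg⟩

theorem exists_tukeyQuotient_iff :
    (∃ φ : α → β, TukeyQuotient φ) ↔ ∃ (φ : α → β) (g : β → α), ∀ b a, g b ≤ a → b ≤ φ a :=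
  ⟨fun ⟨φ, hφ⟩ => ⟨φ, hφ.exists_le_imp_le⟩, fun ⟨φ, _, h⟩ => ⟨φ, tukeyQuotient_of_le_imp_le h⟩⟩

end Tukey

namespace Cardinal

variable {κ : Cardinal.{u}}

theorem mk_Iic_toType_ord_lt (hκ : ℵ₀ ≤ κ) (i : κ.ord.ToType) : #(Iic i) < κ := by
  have := Cardinal.noMaxOrder hκ
  obtain ⟨j, hij⟩ := exists_gt i
  calc #(Iic i) ≤ #(Iio j) := mk_le_mk_of_subset fun _ hx => lt_of_le_of_lt hx hij
    _ < κ := by simpa using mk_Iio_lt j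

theorem IsRegular.bddAbove_of_mk_lt (hκ : κ.IsRegular) {A : Set κ.ord.ToType} (hA : #A < κ) :
    BddAbove A := by
  by_contra h
  have hcof := Order.cof_le (IsCofinal.of_not_bddAbove h)
  rw [Ordinal.cof_toType, hκ.cof_ord] at hcof
  exact hcof.not_gt hA

theorem IsRegular.mk_range_eq {α β : Type u} (hκ : κ.IsRegular) {f : α → β} (hα : #α = κ)
    (hfib : ∀ b, #(f ⁻¹' {b}) < κ) : #(range f) = κ := by
  refine le_antisymm (hα ▸ mk_range_le) (not_lt.mp fun hlt => ?_)
  obtain ⟨⟨b, _⟩, hb⟩ := infinite_pigeonhole_card (rangeFactorization f) κ hα.ge hκ.aleph0_le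
    (by rwa [hκ.cof_ord])
  exact (hfib b).not_ge (hb.trans (mk_le_mk_of_subset fun _ ha => congrArg Subtype.val ha))

end Cardinal

section Calibre

variable {P : Type u} [Preorder P] {κ : Cardinal.{u}}

theorem exists_le_imp_le_of_not_hasCalibre (hκ : κ.IsRegular) (h : ¬ HasCalibre P κ) :
    ∃ (φ : P → κ.ord.ToType) (g : κ.ord.ToType → P), ∀ i p, g i ≤ p → i ≤ φ p := by
  simp only [HasCalibre, not_forall, not_exists, not_and] at h
  obtain ⟨S, hS, hunbdd⟩ := h
  obtain ⟨e⟩ : Nonempty (κ.ord.ToType ≃ S) := Cardinal.eq.mp (by rw [mk_ord_toType, hS])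
  have hsmall : ∀ p : P, #{i | (e i : P) ≤ p} < κ := by
    intro p
    by_contra! hge
    have hA : #{i | (e i : P) ≤ p} = κ :=
      le_antisymm ((mk_set_le _).trans (mk_ord_toType κ).le) hge
    have hinj : Function.Injective fun i => (e i : P) := Subtype.val_injective.comp e.injective
    obtain ⟨_, ⟨i, hi, rfl⟩, hip⟩ :=
      hunbdd _ (image_subset_iff.mpr fun i _ => (e i).2) (by rw [mk_image_eq hinj, hA]) p
    exact hip hi
  choose φ hφ using fun p => hκ.bddAbove_of_mk_lt (hsmall p)
  exact ⟨φ, fun i => e i, fun i p hip => hφ p hip⟩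

theorem not_hasCalibre_of_le_imp_le (hκ : κ.IsRegular) {φ : P → κ.ord.ToType}
    {g : κ.ord.ToType → P} (h : ∀ i p, g i ≤ p → i ≤ φ p) : ¬ HasCalibre P κ := by
  have hsmall : ∀ p, #(g ⁻¹' Iic p) < κ := fun p =>
    (mk_le_mk_of_subset fun i hi => h i p hi).trans_lt (mk_Iic_toType_ord_lt hκ.aleph0_le (φ p))
  have hrange : #(range g) = κ := hκ.mk_range_eq (mk_ord_toType κ) fun p =>
    (mk_le_mk_of_subset fun i hi => le_of_eq hi).trans_lt (hsmall p)
  intro hcal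
  obtain ⟨T, hTg, hT, b, hb⟩ := hcal (range g) hrange
  refine (hsmall b).not_ge ?_
  calc κ = #T := hT.symm
    _ ≤ #(g ⁻¹' T) := mk_preimage_of_subset_range g T hTg
    _ ≤ #(g ⁻¹' Iic b) := mk_le_mk_of_subset (preimage_mono hb)

end Calibre

theorem stmt17_general {P : Type u} [PartialOrder P]
    (κ : Cardinal.{u}) (hκ : κ.IsRegular) :
    ¬ HasCalibre P κ ↔ ∃ φ : P → κ.ord.ToType, TukeyQuotient φ := by
  rw [exists_tukeyQuotient_iff]
  constructor
  · exact exists_le_imp_le_of_not_hasCalibre hκ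
  · rintro ⟨φ, g, h⟩
    exact not_hasCalibre_of_le_imp_le hκ h

/-- for a regular cardinal `κ` and a directed poset `P`: `P` fails to have
calibre `κ` iff there is a Tukey quotient from `P` to `κ` (viewed as the ordinal poset
`κ.ord.toType`). -/
theorem stmt17 {P : Type u} [PartialOrder P] (hP : DirectedPoset P)
    (κ : Cardinal.{u}) (hκ : κ.IsRegular) :
    ¬ HasCalibre P κ ↔ ∃ φ : P → κ.ord.ToType, TukeyQuotient φ :=
  stmt17_general κ hκ
end
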